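/- Let N_y = N_x + N_h − 1. Let e : Ω → ℝ^{N_h} be a square-integrable zero-mean random vector with covariance matrix C_ee, and let n : Ω → ℝ^{N_y} be a square-integrable zero-mean random vector with covariance matrix C_nn, independent of e. Let B : Ω → ℝ^{N_y × N_x} be the random linear-convolution error matrix whose i-th column is e(ω) preceded by i−1 zeros and followed by N_x − i zeros. Then for every deterministic x ∈ ℝ^{N_x}, the random vector w = B x + n has zero mean and covariance matrix Cov(w) = P(x) C_{b'_1 b'_1} P(x)^T + C_nn, where P(x) = Σ_{i=1}^{N_x} x_i D^{i−1} with D the N_y × N_y down-shift matrix (D_{k,l} = 1 iff k = l + 1), and C_{b'_1 b'_1} is the N_y × N_y block matrix [[C_ee, 0],[0, 0]]. -/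

import Mathlib

open MeasureTheory ProbabilityTheory Matrix

/-- The `Ny × Ny` down-shift matrix `D` with `D k l = 1` iff `k = l + 1` (0-based). -/
def downShift (Ny : ℕ) : Matrix (Fin Ny) (Fin Ny) ℝ :=
  Matrix.of fun k l => if k.val = l.val + 1 then 1 else 0

/-- The matrix polynomial `P(x) = ∑ i, x i • D^(i-1)` (1-based; 0-based exponent `i`). -/
def Pmat {Nx : ℕ} (Ny : ℕ) (x : Fin Nx → ℝ) : Matrix (Fin Ny) (Fin Ny) ℝ :=
  ∑ i : Fin Nx, x i • (downShift Ny) ^ i.val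

/-- The block matrix `C_{b'_1 b'_1} = [[Cee, 0], [0, 0]]` of size `Ny × Ny`,
`Ny = Nx + Nh - 1`. -/
def Cb1 {Nh : ℕ} (Nx : ℕ) (Cee : Matrix (Fin Nh) (Fin Nh) ℝ) :
    Matrix (Fin (Nx + Nh - 1)) (Fin (Nx + Nh - 1)) ℝ :=
  Matrix.of fun i k =>
    if hi : i.val < Nh then
      (if hk : k.val < Nh then Cee ⟨i.val, hi⟩ ⟨k.val, hk⟩ else 0)
    else 0

/-!
Zero-padding `e` to length `N_y` gives the paper's vector `b'_1`, and the `i`-th column of `B`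
is `D^(i-1) b'_1`; hence `B x = P(x) b'_1`, whose second-moment matrix is
`P(x) C_{b'_1 b'_1} P(x)ᵀ`. Independence of `e` and `n` makes the cross terms vanish, so the
second moments of `B x` and `n` add up.
-/

def padZero {m : ℕ} (N : ℕ) (v : Fin m → ℝ) : Fin N → ℝ :=
  fun k => if h : k.val < m then v ⟨k.val, h⟩ else 0

def convMatrix {m : ℕ} (N Nx : ℕ) (v : Fin m → ℝ) : Matrix (Fin N) (Fin Nx) ℝ :=
  Matrix.of fun k i =>
    if h : i.val ≤ k.val ∧ k.val - i.val < m then v ⟨k.val - i.val, h.2⟩ else 0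

lemma continuous_padZero {m : ℕ} (N : ℕ) : Continuous (padZero (m := m) N) := by
  refine continuous_pi fun k => ?_
  by_cases h : k.val < m
  · simpa [padZero, h] using continuous_apply (⟨k.val, h⟩ : Fin m)
  · simpa [padZero, h] using continuous_const

lemma sum_ite_val_eq_add {N : ℕ} (k : Fin N) (m : ℕ) (f : Fin N → ℝ) :
    ∑ l : Fin N, (if k.val = l.val + m then f l else 0)
      = if h : m ≤ k.val then f ⟨k.val - m, by omega⟩ else 0 := by
  split_ifs with h
  · rw [Finset.sum_eq_single_of_mem ⟨k.val - m, by omega⟩ (Finset.mem_univ _)]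
    · simp only [if_pos (show k.val = k.val - m + m by omega)]
    · intro l _ hl
      exact if_neg fun hk => hl (Fin.ext (by simp; omega))
  · exact Finset.sum_eq_zero fun l _ => if_neg (by omega)

lemma downShift_mulVec_apply (N : ℕ) (w : Fin N → ℝ) (k : Fin N) :
    (downShift N *ᵥ w) k = if h : 1 ≤ k.val then w ⟨k.val - 1, by omega⟩ else 0 := by
  simp only [mulVec, dotProduct, downShift, Matrix.of_apply, ite_mul, one_mul, zero_mul]
  exact sum_ite_val_eq_add k 1 w

lemma downShift_pow_mulVec_apply (N m : ℕ) (w : Fin N → ℝ) (k : Fin N) :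
    (downShift N ^ m *ᵥ w) k = if h : m ≤ k.val then w ⟨k.val - m, by omega⟩ else 0 := by
  induction m generalizing k with
  | zero => simp
  | succ m ih =>
    rw [pow_succ', ← mulVec_mulVec, downShift_mulVec_apply]
    split_ifs with h1 h2 h2
    · rw [ih, dif_pos (by simp; omega)]; congr 2; simp; omega
    · rw [ih, dif_neg (by simp; omega)]
    · omega
    · rfl

lemma convMatrix_apply_eq_downShift_pow_mulVec {m : ℕ} (N Nx : ℕ) (v : Fin m → ℝ)
    (k : Fin N) (i : Fin Nx) :
    convMatrix N Nx v k i = (downShift N ^ i.val *ᵥ padZero N v) k := by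
  rw [downShift_pow_mulVec_apply]
  simp only [convMatrix, padZero, Matrix.of_apply]
  split_ifs <;> first | rfl | omega

lemma convMatrix_mulVec {m : ℕ} (N Nx : ℕ) (v : Fin m → ℝ) (x : Fin Nx → ℝ) :
    convMatrix N Nx v *ᵥ x = Pmat N x *ᵥ padZero N v := by
  ext k
  simp only [Pmat, sum_mulVec, smul_mulVec, Finset.sum_apply, Pi.smul_apply, smul_eq_mul,
    ← convMatrix_apply_eq_downShift_pow_mulVec]
  simp only [mulVec, dotProduct, mul_comm]

section SecondMoments

variable {Ω ι κ : Type*} [MeasurableSpace Ω] {μ : Measure Ω} [Fintype ι] {v : ι → Ω → ℝ}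

lemma memLp_mulVec_apply {p : ENNReal} (hv : ∀ j, MemLp (v j) p μ) (A : Matrix κ ι ℝ)
    (i : κ) : MemLp (fun ω => (A *ᵥ fun j => v j ω) i) p μ :=
  memLp_finsetSum _ fun j _ => (hv j).const_mul (A i j)

lemma integral_mulVec_apply (hv : ∀ j, Integrable (v j) μ) (A : Matrix κ ι ℝ) (i : κ) :
    ∫ ω, (A *ᵥ fun j => v j ω) i ∂μ = (A *ᵥ fun j => ∫ ω, v j ω ∂μ) i := by
  simp only [mulVec, dotProduct]
  rw [integral_finsetSum _ fun j _ => (hv j).const_mul (A i j)]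
  simp only [integral_const_mul]

lemma integral_mulVec_mul_mulVec (hv : ∀ j, MemLp (v j) 2 μ) (A A' : Matrix κ ι ℝ)
    (i k : κ) :
    ∫ ω, (A *ᵥ fun j => v j ω) i * (A' *ᵥ fun j => v j ω) k ∂μ
      = (A * Matrix.of (fun j l => ∫ ω, v j ω * v l ω ∂μ) * A'ᵀ) i k := by
  have hvv : ∀ j l, Integrable (fun ω => A i j * A' k l * (v j ω * v l ω)) μ :=
    fun j l => ((hv j).integrable_mul (hv l)).const_mul _
  have hexpand : ∀ ω, (A *ᵥ fun j => v j ω) i * (A' *ᵥ fun j => v j ω) k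
      = ∑ j, ∑ l, A i j * A' k l * (v j ω * v l ω) := fun ω => by
    simp only [mulVec, dotProduct, Finset.sum_mul_sum]
    exact Fintype.sum_congr _ _ fun j => Fintype.sum_congr _ _ fun l => by ring
  simp only [hexpand, Matrix.mul_apply, Matrix.of_apply, transpose_apply, Finset.sum_mul]
  rw [integral_finsetSum _ fun j _ => integrable_finsetSum _ fun l _ => hvv j l,
    Finset.sum_comm]
  refine Fintype.sum_congr _ _ fun j => ?_
  rw [integral_finsetSum _ fun l _ => hvv j l]
  refine Fintype.sum_congr _ _ fun l => ?_
  rw [integral_const_mul]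
  ring

lemma integral_add_mul_add {f g f' g' : Ω → ℝ} (hf : MemLp f 2 μ) (hg : MemLp g 2 μ)
    (hf' : MemLp f' 2 μ) (hg' : MemLp g' 2 μ) (hfg' : ∫ ω, f ω * g' ω ∂μ = 0)
    (hgf' : ∫ ω, g ω * f' ω ∂μ = 0) :
    ∫ ω, (f ω + g ω) * (f' ω + g' ω) ∂μ = ∫ ω, f ω * f' ω ∂μ + ∫ ω, g ω * g' ω ∂μ := by
  have hint : ∀ {a b : Ω → ℝ}, MemLp a 2 μ → MemLp b 2 μ →
      Integrable (fun ω => a ω * b ω) μ := fun ha hb => ha.integrable_mul hb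
  have hsplit : ∀ ω, (f ω + g ω) * (f' ω + g' ω)
      = (f ω * f' ω + g ω * g' ω) + (f ω * g' ω + g ω * f' ω) := fun ω => by ring
  have hsum : ∀ {a b c d : Ω → ℝ}, Integrable (fun ω => a ω * b ω) μ →
      Integrable (fun ω => c ω * d ω) μ → Integrable (fun ω => a ω * b ω + c ω * d ω) μ :=
    fun h h' => h.add h'
  simp only [hsplit]
  rw [integral_add (hsum (hint hf hf') (hint hg hg')) (hsum (hint hf hg') (hint hg hf')),
    integral_add (hint hf hf') (hint hg hg'), integral_add (hint hf hg') (hint hg hf'), hfg',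
    hgf', add_zero, add_zero]

end SecondMoments

section PaddedVector

variable {Ω : Type*} [MeasurableSpace Ω] {μ : Measure Ω} {m : ℕ} {e : Fin m → Ω → ℝ}

lemma memLp_padZero_apply {p : ENNReal} (he : ∀ j, MemLp (e j) p μ) (N : ℕ) (k : Fin N) :
    MemLp (fun ω => padZero N (fun j => e j ω) k) p μ := by
  unfold padZero
  split_ifs
  exacts [he _, MemLp.zero]

lemma integral_padZero_apply (N : ℕ) (k : Fin N) :
    ∫ ω, padZero N (fun j => e j ω) k ∂μ = padZero N (fun j => ∫ ω, e j ω ∂μ) k := by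
  unfold padZero
  split_ifs
  exacts [rfl, integral_zero Ω ℝ]

lemma of_integral_padZero_mul_padZero {Nx : ℕ} {Cee : Matrix (Fin m) (Fin m) ℝ}
    (hCee : ∀ i j, ∫ ω, e i ω * e j ω ∂μ = Cee i j) :
    Matrix.of (fun i k => ∫ ω, padZero (Nx + m - 1) (fun j => e j ω) i *
      padZero (Nx + m - 1) (fun j => e j ω) k ∂μ) = Cb1 Nx Cee := by
  ext i k
  simp only [padZero, Cb1, Matrix.of_apply]
  split_ifs <;> simp [hCee]

end PaddedVector

/-- with `Ny = Nx + Nh - 1`, let `e` be a square-integrable zero-mean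
random vector with covariance `Cee`, let `n` be a square-integrable zero-mean random
vector with covariance `Cnn`, independent of `e`, and let `B(ω)` be the random
linear-convolution error matrix whose `i`-th column is `e(ω)` shifted down by `i - 1`
positions (1-based). Then for every deterministic `x`, `w = B x + n` has zero mean and
covariance matrix `P(x) * C_{b'_1 b'_1} * P(x)ᵀ + Cnn`. -/
theorem stmt_7
    {Ω : Type*} [MeasurableSpace Ω] {μ : Measure Ω} [IsProbabilityMeasure μ]
    {Nh Nx : ℕ}
    (e : Fin Nh → Ω → ℝ) (Cee : Matrix (Fin Nh) (Fin Nh) ℝ)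
    (n : Fin (Nx + Nh - 1) → Ω → ℝ)
    (Cnn : Matrix (Fin (Nx + Nh - 1)) (Fin (Nx + Nh - 1)) ℝ)
    (heL2 : ∀ i, MemLp (e i) 2 μ)
    (hemean : ∀ i, ∫ ω, e i ω ∂μ = 0)
    (hCee : ∀ i j, ∫ ω, e i ω * e j ω ∂μ = Cee i j)
    (hnL2 : ∀ i, MemLp (n i) 2 μ)
    (hnmean : ∀ i, ∫ ω, n i ω ∂μ = 0)
    (hCnn : ∀ i k, ∫ ω, n i ω * n k ω ∂μ = Cnn i k)
    (hen : IndepFun (fun ω i => e i ω) (fun ω i => n i ω) μ)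
    (B : Ω → Matrix (Fin (Nx + Nh - 1)) (Fin Nx) ℝ)
    (hB : ∀ ω k i, B ω k i =
      if h : i.val ≤ k.val ∧ k.val - i.val < Nh then e ⟨k.val - i.val, h.2⟩ ω else 0)
    (x : Fin Nx → ℝ) :
    (∀ i, ∫ ω, ((B ω).mulVec x i + n i ω) ∂μ = 0) ∧
    (∀ i k, ∫ ω, ((B ω).mulVec x i + n i ω) * ((B ω).mulVec x k + n k ω) ∂μ
      = (Pmat (Nx + Nh - 1) x * Cb1 Nx Cee * (Pmat (Nx + Nh - 1) x)ᵀ + Cnn) i k) := by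
  set P := Pmat (Nx + Nh - 1) x
  set v : Fin (Nx + Nh - 1) → Ω → ℝ := fun k ω => padZero _ (fun j => e j ω) k
  have hBx : ∀ ω, B ω *ᵥ x = P *ᵥ fun k => v k ω := fun ω => by
    rw [← convMatrix_mulVec]
    congr 1
    ext k i
    exact hB ω k i
  have hv : ∀ k, MemLp (v k) 2 μ := memLp_padZero_apply heL2 _
  have hPv : ∀ i, MemLp (fun ω => (P *ᵥ fun k => v k ω) i) 2 μ := memLp_mulVec_apply hv P
  have hvmean : (fun k => ∫ ω, v k ω ∂μ) = 0 := funext fun k => by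
    simp only [v, integral_padZero_apply, hemean]
    simp [padZero]
  have hcross : ∀ i k, ∫ ω, (P *ᵥ fun k => v k ω) i * n k ω ∂μ = 0 := fun i k => by
    have hφ : Measurable fun u : Fin Nh → ℝ => (P *ᵥ padZero _ u) i :=
      ((continuous_apply i).comp
        (continuous_const.matrix_mulVec (continuous_padZero _))).measurable
    have hind : IndepFun (fun ω => (P *ᵥ fun k => v k ω) i) (n k) μ :=
      hen.comp hφ (measurable_pi_apply k)
    rw [hind.integral_fun_mul_eq_mul_integral (hPv i).aestronglyMeasurable
      (hnL2 k).aestronglyMeasurable, hnmean, mul_zero]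
  simp only [hBx]
  refine ⟨fun i => ?_, fun i k => ?_⟩
  · rw [integral_add ((hPv i).integrable one_le_two) ((hnL2 i).integrable one_le_two),
      integral_mulVec_apply fun k => (hv k).integrable one_le_two, hvmean, mulVec_zero, hnmean,
      Pi.zero_apply, add_zero]
  · rw [integral_add_mul_add (hPv i) (hnL2 i) (hPv k) (hnL2 k) (hcross i k)
      (by simpa only [mul_comm] using hcross k i), integral_mulVec_mul_mulVec hv,
      of_integral_padZero_mul_padZero hCee, hCnn, Matrix.add_apply]
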